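/- arXiv:2104.11621 — 2 statements merged into one kernel-verified Lean document; each statement's English description precedes it below -/
import Mathlib

section
/- Every line of PG(2,q) is a ghost, i.e., the sum of the (q-1)-th powers of the Rédei factors of the q+1 points of a line is the zero polynomial. -/
/-!
Evaluate the power sum at a vector `x`. Since `c ^ (q - 1) = 1` for `c ≠ 0` and there are
`q - 1 = -1` nonzero scalars, `-G(x)` is the sum of `(v ⬝ᵥ x) ^ (q - 1)` over all nonzero vectors
`v` of the plane `ℓ ⬝ᵥ v = 0`, and the zero vector can be added freely. That sum counts the
vectors of the plane outside the subspace `x ⬝ᵥ v = 0`, a difference of two positive powers of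
`q`, so it vanishes in `F`. A polynomial of degree `< q` in each variable vanishing on all of
`F³` is zero.
-/

open MvPolynomial
open scoped LinearAlgebra.Projectivization

/-- The Rédei factor of a point of `PG(n,q)`. -/
noncomputable def redeiFactor {F : Type*} [Field F] {n : ℕ}
    (P : ℙ F (Fin n → F)) : MvPolynomial (Fin n) F :=
  ∑ i, C (P.rep i) * X i

/-- The power sum polynomial of a finite set of points of `PG(n,q)`. -/
noncomputable def powerSum {F : Type*} [Field F] [Fintype F] {n : ℕ}
    (S : Finset (ℙ F (Fin n → F))) : MvPolynomial (Fin n) F :=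
  ∑ P ∈ S, redeiFactor P ^ (Fintype.card F - 1)


/-- The line of PG(2,q) with Plücker coordinates ℓ, as a finite set of points. -/
noncomputable def lineFinset {F : Type*} [Field F] [DecidableEq F]
    [Fintype (ℙ F (Fin 3 → F))] (ℓ : Fin 3 → F) : Finset (ℙ F (Fin 3 → F)) :=
  Finset.univ.filter fun P => ∑ i, ℓ i * P.rep i = 0

open Finset Matrix

namespace Projectivization

variable {K V : Type*} [Field K] [AddCommGroup V] [Module K V]

theorem smul_rep_injective : Function.Injective fun p : ℙ K V × Kˣ => p.2 • p.1.rep := by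
  rintro ⟨P, c⟩ ⟨P', c'⟩ h
  simp only at h
  have hP : P = P' := by
    rw [← P.mk_rep, ← P'.mk_rep, mk_eq_mk_iff]
    exact ⟨c⁻¹ * c', by rw [mul_smul, ← h, inv_smul_smul]⟩
  subst hP
  exact Prod.ext rfl (Units.ext (smul_left_injective K P.rep_nonzero h))

theorem sum_sum_units_smul_rep [Fintype K] [DecidableEq K] [Fintype V] [DecidableEq V]
    [Fintype (ℙ K V)] {M : Type*} [AddCommMonoid M] (g : V → M) :
    ∑ P : ℙ K V, ∑ c : Kˣ, g (c • P.rep) = ∑ v with v ≠ 0, g v := by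
  rw [← Fintype.sum_prod_type', sum_subtype (p := (· ≠ 0)) _ fun _ => mem_filter_univ _]
  refine Fintype.sum_bijective
    (fun p => ⟨p.2 • p.1.rep, smul_ne_zero p.2.ne_zero p.1.rep_nonzero⟩) ⟨?_, ?_⟩ _ _ fun _ => rfl
  · exact fun p p' h => smul_rep_injective (congrArg Subtype.val h)
  · rintro ⟨v, hv⟩
    obtain ⟨a, ha⟩ := exists_smul_eq_mk_rep K v hv
    exact ⟨⟨mk K v hv, a⁻¹⟩, Subtype.ext (by simp [← ha])⟩

end Projectivization

section FiniteField

variable {F : Type*} [Field F] [Fintype F]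

theorem FiniteField.sum_pow_card_sub_one {ι : Type*} [DecidableEq F] (s : Finset ι)
    (f : ι → F) : ∑ i ∈ s, f i ^ (Fintype.card F - 1) = #{i ∈ s | f i ≠ 0} := by
  rw [natCast_card_filter]
  refine sum_congr rfl fun i _ => ?_
  split_ifs with h
  · exact FiniteField.pow_card_sub_one_eq_one _ h
  · rw [not_not.mp h, zero_pow (Nat.sub_ne_zero_of_lt Fintype.one_lt_card)]

theorem FiniteField.sum_units_mul_pow_card_sub_one [DecidableEq F] (a : F) :
    ∑ c : Fˣ, ((c : F) * a) ^ (Fintype.card F - 1) = -a ^ (Fintype.card F - 1) := by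
  have hq : ((Fintype.card Fˣ : ℕ) : F) = -1 := by
    rw [Fintype.card_units, Nat.cast_sub Fintype.card_pos, FiniteField.cast_card_eq_zero]
    ring
  simp_rw [mul_pow, FiniteField.pow_card_sub_one_eq_one _ (Units.ne_zero _), one_mul,
    sum_const, card_univ, nsmul_eq_mul, hq, neg_one_mul]

variable {V W : Type*} [AddCommGroup V] [Module F V] [Fintype V]
  [AddCommGroup W] [Module F W] [FiniteDimensional F W]

theorem LinearMap.natCast_card_ker_eq_zero [DecidableEq W] (φ : V →ₗ[F] W)
    (h : Module.finrank F W < Module.finrank F V) : (#{v | φ v = 0} : F) = 0 := by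
  classical
  have hker : 0 < Module.finrank F (ker φ) := by
    have := φ.finrank_range_add_finrank_ker
    have := φ.range.finrank_le
    omega
  have hcard : #{v | φ v = 0} = Fintype.card F ^ Module.finrank F (ker φ) := by
    rw [← Module.card_eq_pow_finrank, Fintype.card_of_subtype {v | φ v = 0} fun v => by
      simp [mem_ker]]
  rw [hcard, Nat.cast_pow, FiniteField.cast_card_eq_zero, zero_pow hker.ne']

theorem LinearMap.sum_ker_pow_card_sub_one_eq_zero [DecidableEq F] [DecidableEq W]
    (φ : V →ₗ[F] W) (ψ : V →ₗ[F] F) (h : Module.finrank F W + 1 < Module.finrank F V) :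
    ∑ v with φ v = 0, ψ v ^ (Fintype.card F - 1) = 0 := by
  rw [FiniteField.sum_pow_card_sub_one, filter_filter]
  have hsplit := card_filter_add_card_filter_not (s := {v | φ v = 0}) (fun v => ψ v = 0)
  have hφ := φ.natCast_card_ker_eq_zero (by omega)
  have hφψ := (φ.prod ψ).natCast_card_ker_eq_zero (by simpa using h)
  simp only [filter_filter, coe_prod, Function.prod, Prod.mk_eq_zero] at hsplit hφψ
  rw [← hsplit, Nat.cast_add, hφψ, zero_add] at hφ
  simpa only [ne_eq] using hφ

end FiniteField

section PowerSum

variable {F : Type*} [Field F] {n : ℕ}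

theorem isHomogeneous_redeiFactor (P : ℙ F (Fin n → F)) : (redeiFactor P).IsHomogeneous 1 :=
  IsHomogeneous.sum _ _ _ fun i _ => (isHomogeneous_X F i).C_mul _

theorem eval_redeiFactor (P : ℙ F (Fin n → F)) (x : Fin n → F) :
    eval x (redeiFactor P) = P.rep ⬝ᵥ x := by
  simp [redeiFactor, dotProduct]

variable [Fintype F]

theorem isHomogeneous_powerSum (S : Finset (ℙ F (Fin n → F))) :
    (powerSum S).IsHomogeneous (Fintype.card F - 1) := by
  simpa only [powerSum, one_mul] using IsHomogeneous.sum _ _ _ fun P _ =>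
    (isHomogeneous_redeiFactor P).pow (Fintype.card F - 1)

theorem eval_powerSum (S : Finset (ℙ F (Fin n → F))) (x : Fin n → F) :
    eval x (powerSum S) = ∑ P ∈ S, (P.rep ⬝ᵥ x) ^ (Fintype.card F - 1) := by
  simp [powerSum, eval_redeiFactor]

theorem powerSum_eq_zero_iff_forall_eval_eq_zero (S : Finset (ℙ F (Fin n → F))) :
    powerSum S = 0 ↔ ∀ x, eval x (powerSum S) = 0 := by
  refine ⟨fun h x => by rw [h, map_zero], fun h => ?_⟩
  refine eq_zero_of_eval_zero_at_prod_finset _ (fun _ => univ) (fun i => ?_) fun x _ => h x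
  calc (powerSum S).degreeOf i ≤ (powerSum S).totalDegree := degreeOf_le_totalDegree _ i
    _ ≤ Fintype.card F - 1 := (isHomogeneous_powerSum S).totalDegree_le
    _ < #(univ : Finset F) := Nat.sub_lt Fintype.card_pos one_pos

end PowerSum

theorem sum_lineFinset_pow_card_sub_one_eq_zero {F : Type*} [Field F] [Fintype F]
    [DecidableEq F] [Fintype (ℙ F (Fin 3 → F))] (ℓ x : Fin 3 → F) :
    ∑ P ∈ lineFinset ℓ, (P.rep ⬝ᵥ x) ^ (Fintype.card F - 1) = 0 := by
  set g : (Fin 3 → F) → F := fun v => if ℓ ⬝ᵥ v = 0 then (v ⬝ᵥ x) ^ (Fintype.card F - 1) else 0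
  have hg : ∀ v ∈ (univ : Finset (Fin 3 → F)), g v ≠ 0 → v ≠ 0 := by
    rintro v - hv rfl
    simp [g, zero_pow (Nat.sub_ne_zero_of_lt Fintype.one_lt_card)] at hv
  calc ∑ P ∈ lineFinset ℓ, (P.rep ⬝ᵥ x) ^ (Fintype.card F - 1)
      = -∑ P : ℙ F (Fin 3 → F), ∑ c : Fˣ, g (c • P.rep) := by
        rw [lineFinset, sum_filter, ← sum_neg_distrib]
        refine sum_congr rfl fun P _ => ?_
        simp only [g, dotProduct_smul, smul_dotProduct, Units.smul_def, smul_eq_mul,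
          mul_eq_zero, Units.ne_zero, false_or]
        rw [sum_ite_irrel, sum_const_zero, FiniteField.sum_units_mul_pow_card_sub_one,
          apply_ite Neg.neg, neg_neg, neg_zero]
        rfl
    _ = -∑ v with ℓ ⬝ᵥ v = 0, (x ⬝ᵥ v) ^ (Fintype.card F - 1) := by
        rw [Projectivization.sum_sum_units_smul_rep, sum_filter_of_ne hg, sum_filter]
        simp_rw [g, dotProduct_comm x]
    _ = 0 := by
        rw [neg_eq_zero]
        simpa using (dotProductBilin F F ℓ).sum_ker_pow_card_sub_one_eq_zero
          (dotProductBilin F F x) (by simp)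

theorem line_ghost_general {F : Type*} [Field F] [Fintype F] [DecidableEq F]
    [Fintype (ℙ F (Fin 3 → F))] (ℓ : Fin 3 → F) :
    powerSum (lineFinset ℓ) = 0 :=
  (powerSum_eq_zero_iff_forall_eval_eq_zero _).2 fun x => by
    rw [eval_powerSum, sum_lineFinset_pow_card_sub_one_eq_zero]

/-- Every line of PG(2,q) is a ghost. -/
theorem line_ghost {F : Type*} [Field F] [Fintype F] [DecidableEq F]
    [Fintype (ℙ F (Fin 3 → F))] (ℓ : Fin 3 → F) (hℓ : ℓ ≠ 0) :
    powerSum (lineFinset ℓ) = 0 :=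
  line_ghost_general ℓ
end

section
/- Let p be prime. The number of ghost multisets of PG(2,p), i.e., multisets of points with multiplicities in Z/pZ whose power sum polynomial is the zero polynomial, equals p^(binomial(p+1,2)+1). -/
open MvPolynomial
open scoped LinearAlgebra.Projectivization

/-- The power sum polynomial of a multiset of points of PG(2,q) with multiplicities
in ℤ/pℤ (p the characteristic of F). -/
noncomputable def mpowerSum (p : ℕ) {F : Type*} [Field F] [Fintype F] [CharP F p]
    [Fintype (ℙ F (Fin 3 → F))]
    (m : ℙ F (Fin 3 → F) → ZMod p) : MvPolynomial (Fin 3) F :=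
  ∑ P : ℙ F (Fin 3 → F),
    ZMod.castHom (dvd_refl p) F (m P) • (redeiFactor P ^ (Fintype.card F - 1))

/-!
The map `m ↦ mpowerSum p m` is `ZMod p`-linear and the ghosts are its kernel, so by rank–nullity
it suffices to know that its image, the span of the `(p-1)`-th powers of the linear forms, is the
whole space of ternary forms of degree `p - 1`, of dimension `C(p+1, 2)`. A monomial `X^e` of that
degree is recovered as `∑_v (∏ᵢ vᵢ^(p-1-eᵢ)) • (v·X)^(p-1)` up to the factor
`(-1)^3 · multinomial e`, a unit since `∑ eᵢ < p`: expanding, the coefficient of `X^k` is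
a product of sums `∑_t t^(kᵢ + p-1-eᵢ)`, which vanish as soon as some exponent is below
`p - 1`, that is, unless `k = e`.
-/

open Finset

noncomputable def linearForm {R σ : Type*} [CommSemiring R] [Fintype σ] (v : σ → R) :
    MvPolynomial σ R :=
  ∑ i, C (v i) * X i

section LinearForm

variable {R σ : Type*} [CommSemiring R] [Fintype σ]

lemma linearForm_smul (c : R) (v : σ → R) : linearForm (c • v) = C c * linearForm v := by
  simp only [linearForm, mul_sum, Pi.smul_apply, smul_eq_mul, map_mul, mul_assoc]

lemma isHomogeneous_linearForm (v : σ → R) : (linearForm v).IsHomogeneous 1 :=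
  IsHomogeneous.sum _ _ _ fun _ _ => isHomogeneous_C_mul_X _ _

lemma prod_univ_X_pow_eq_monomial (d : σ →₀ ℕ) : ∏ i, X i ^ d i = monomial d (1 : R) := by
  rw [monomial_eq, C_1, one_mul, Finsupp.prod_fintype _ _ fun _ => pow_zero _]

lemma linearForm_pow [DecidableEq σ] (v : σ → R) (m : ℕ) :
    linearForm v ^ m = ∑ k ∈ piAntidiag univ m,
      (Nat.multinomial univ k * ∏ i, v i ^ k i) • ∏ i, X i ^ k i := by
  rw [linearForm, sum_pow_eq_sum_piAntidiag]
  refine sum_congr rfl fun k _ => ?_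
  simp only [mul_pow, prod_mul_distrib, ← map_pow, ← map_prod, smul_eq_C_mul, map_mul,
    map_natCast, mul_assoc]

end LinearForm

lemma exists_lt_of_sum_eq_of_ne {σ : Type*} [Fintype σ] {e k : σ → ℕ}
    (h : ∑ i, k i = ∑ i, e i) (hne : k ≠ e) : ∃ i, k i < e i := by
  by_contra! hle
  exact hne (funext fun i =>
    ((sum_eq_sum_iff_of_le fun i _ => hle i).1 h.symm i (mem_univ i)).symm)

lemma FiniteField.sum_pow_card_sub_one_s18 (K : Type*) [Field K] [Fintype K] :
    ∑ x : K, x ^ (Fintype.card K - 1) = -1 := by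
  classical
  have hq : Fintype.card K - 1 ≠ 0 := Nat.sub_ne_zero_of_lt Fintype.one_lt_card
  calc ∑ x : K, x ^ (Fintype.card K - 1) = ∑ x ∈ univ.erase (0 : K), (1 : K) := by
        rw [← sum_erase univ (zero_pow hq)]
        exact sum_congr rfl fun x hx =>
          FiniteField.pow_card_sub_one_eq_one x (ne_of_mem_erase hx)
    _ = -1 := by simp [card_erase_of_mem, Nat.cast_sub Fintype.card_pos]

section FiniteField

variable {K σ : Type*} [Field K] [Fintype K] [Fintype σ] [DecidableEq σ]

local notation "q" => Fintype.card K

lemma sum_prod_pow_smul_linearForm_pow (e : σ → ℕ) (he : ∑ i, e i = q - 1) :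
    ∑ v : σ → K, (∏ i, v i ^ (q - 1 - e i)) • linearForm v ^ (q - 1)
      = ((-1) ^ Fintype.card σ * Nat.multinomial univ e : K) • ∏ i, X i ^ e i := by
  have he_le (i : σ) : e i ≤ q - 1 :=
    he ▸ single_le_sum (fun j _ => Nat.zero_le (e j)) (mem_univ i)
  simp_rw [linearForm_pow, smul_sum, smul_smul]
  rw [sum_comm]
  have sum_over_v (k : σ → ℕ) : ∑ v : σ → K, ((∏ i, v i ^ (q - 1 - e i)) *
        (Nat.multinomial univ k * ∏ i, v i ^ k i)) • ∏ i, (X i : MvPolynomial σ K) ^ k i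
      = (Nat.multinomial univ k * ∏ i, ∑ t : K, t ^ (k i + (q - 1 - e i))) •
          ∏ i, X i ^ k i := by
    rw [← sum_smul, Fintype.prod_sum, mul_sum]
    refine congrArg (· • _) (sum_congr rfl fun v _ => ?_)
    simp only [pow_add, prod_mul_distrib]
    ring
  simp_rw [sum_over_v]
  rw [sum_eq_single_of_mem e (mem_piAntidiag.2 ⟨he, fun i _ => mem_univ i⟩)]
  · have (i : σ) : e i + (q - 1 - e i) = q - 1 := Nat.add_sub_cancel' (he_le i)
    simp only [this, FiniteField.sum_pow_card_sub_one_s18, prod_const, card_univ]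
    rw [mul_comm]
  · intro k hk hke
    obtain ⟨i, hi⟩ := exists_lt_of_sum_eq_of_ne ((mem_piAntidiag.1 hk).1.trans he.symm) hke
    have hlt : k i + (q - 1 - e i) < q - 1 := by have := he_le i; omega
    rw [prod_eq_zero (mem_univ i) (FiniteField.sum_pow_lt_card_sub_one K _ hlt), mul_zero,
      zero_smul]

end FiniteField

lemma ZMod.natCast_multinomial_ne_zero {p : ℕ} [Fact p.Prime] {σ : Type*} (s : Finset σ)
    (e : σ → ℕ) (h : ∑ i ∈ s, e i < p) : (Nat.multinomial s e : ZMod p) ≠ 0 := by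
  rw [Ne, ZMod.natCast_eq_zero_iff]
  intro hdvd
  have := (Nat.Prime.dvd_factorial Fact.out).1
    (hdvd.trans (Dvd.intro_left _ (Nat.multinomial_spec s e)))
  omega

lemma monomial_mem_span_linearForm_pow {p : ℕ} [Fact p.Prime] {σ : Type*} [Fintype σ]
    (d : σ →₀ ℕ) (hd : d.degree = p - 1) :
    monomial d 1 ∈
      Submodule.span (ZMod p) (Set.range fun v : σ → ZMod p => linearForm v ^ (p - 1)) := by
  classical
  have hsum : ∑ i, d i = p - 1 := by rw [← Finsupp.degree_eq_sum, hd]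
  have hunit : ((-1) ^ Fintype.card σ * Nat.multinomial univ d : ZMod p) ≠ 0 :=
    mul_ne_zero (pow_ne_zero _ (neg_ne_zero.2 one_ne_zero))
      (ZMod.natCast_multinomial_ne_zero _ _ (by have := NeZero.pos p; omega))
  have key := sum_prod_pow_smul_linearForm_pow (K := ZMod p) d (by rwa [ZMod.card])
  rw [prod_univ_X_pow_eq_monomial, ZMod.card] at key
  rw [← inv_smul_smul₀ hunit (monomial d 1), ← key]
  exact Submodule.smul_mem _ _ (Submodule.sum_mem _ fun v _ =>
    Submodule.smul_mem _ _ (Submodule.subset_span ⟨v, rfl⟩))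

lemma span_linearForm_pow_eq_homogeneousSubmodule (p : ℕ) [Fact p.Prime] (σ : Type*)
    [Fintype σ] :
    Submodule.span (ZMod p) (Set.range fun v : σ → ZMod p => linearForm v ^ (p - 1))
      = homogeneousSubmodule σ (ZMod p) (p - 1) := by
  apply le_antisymm
  · rw [Submodule.span_le]
    rintro _ ⟨v, rfl⟩
    simpa using (isHomogeneous_linearForm v).pow (p - 1)
  · rw [homogeneousSubmodule_eq_finsupp_supported, ← restrictSupport, restrictSupport_eq_span,
      Submodule.span_le]
    rintro _ ⟨d, hd, rfl⟩
    exact monomial_mem_span_linearForm_pow d hd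

lemma finrank_homogeneousSubmodule (K σ : Type*) [Field K] [Fintype σ] (n : ℕ) :
    Module.finrank K (homogeneousSubmodule σ K n) = (Fintype.card σ + n - 1).choose n := by
  classical
  have : homogeneousSubmodule σ K n
      = restrictSupport K ↑(univ.finsuppAntidiag n : Finset (σ →₀ ℕ)) := by
    rw [homogeneousSubmodule_eq_finsupp_supported]
    congr
    ext d
    simp [mem_finsuppAntidiag, Finsupp.degree_eq_sum]
  rw [this, Module.finrank_eq_nat_card_basis (basisRestrictSupport K _), Nat.card_coe_set_eq,
    Set.ncard_coe_finset, card_finsuppAntidiag_nat_eq_choose, card_univ]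

lemma redeiFactor_eq_linearForm {K : Type*} [Field K] {n : ℕ} (P : ℙ K (Fin n → K)) :
    redeiFactor P = linearForm P.rep := rfl

lemma span_redeiFactor_pow_eq_span_linearForm_pow (K : Type*) [Field K] [Fintype K] (n : ℕ) :
    Submodule.span K
        (Set.range fun P : ℙ K (Fin n → K) => redeiFactor P ^ (Fintype.card K - 1)) =
      Submodule.span K (Set.range fun v : Fin n → K => linearForm v ^ (Fintype.card K - 1)) := by
  apply le_antisymm
  · exact Submodule.span_mono (Set.range_subset_iff.2 fun P => ⟨P.rep, rfl⟩)
  · rw [Submodule.span_le]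
    rintro _ ⟨v, rfl⟩
    by_cases hv : v = 0
    · simp [hv, linearForm, zero_pow (Nat.sub_ne_zero_of_lt Fintype.one_lt_card)]
    · obtain ⟨a, ha⟩ := Projectivization.exists_smul_eq_mk_rep K v hv
      refine Submodule.subset_span ⟨Projectivization.mk K v hv, ?_⟩
      dsimp only
      rw [redeiFactor_eq_linearForm, ← ha, Units.smul_def, linearForm_smul, mul_pow, ← map_pow,
        FiniteField.pow_card_sub_one_eq_one _ a.ne_zero, map_one, one_mul]

lemma finrank_span_redeiFactor_pow (p : ℕ) [Fact p.Prime] :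
    Module.finrank (ZMod p) (Submodule.span (ZMod p)
      (Set.range fun P : ℙ (ZMod p) (Fin 3 → ZMod p) => redeiFactor P ^ (p - 1)))
      = (p + 1).choose 2 := by
  have hp := (Fact.out : p.Prime).two_le
  have hspan := span_redeiFactor_pow_eq_span_linearForm_pow (ZMod p) 3
  rw [ZMod.card] at hspan
  rw [hspan, span_linearForm_pow_eq_homogeneousSubmodule, finrank_homogeneousSubmodule,
    Fintype.card_fin, show 3 + (p - 1) - 1 = p + 1 by omega]
  exact Nat.choose_symm_of_eq_add (by omega)

lemma card_projectivePlane (K : Type*) [Field K] [Fintype K] :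
    Nat.card (ℙ K (Fin 3 → K)) = Fintype.card K ^ 2 + Fintype.card K + 1 := by
  rw [Projectivization.card_of_finrank _ _ (Module.finrank_fin_fun _), Nat.card_eq_fintype_card]
  simp only [sum_range_succ, sum_range_zero]
  ring

/-- The number of ghost multisets of PG(2,p) (multiplicities mod p, zero power sum
polynomial) is p^(binomial(p+1,2)+1). -/
theorem card_ghosts (p : ℕ) [Fact p.Prime]
    [Fintype (ℙ (ZMod p) (Fin 3 → ZMod p))] :
    Nat.card {m : ℙ (ZMod p) (Fin 3 → ZMod p) → ZMod p // mpowerSum p m = 0}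
      = p ^ (Nat.choose (p + 1) 2 + 1) := by
  set L := Fintype.linearCombination (ZMod p)
    fun P : ℙ (ZMod p) (Fin 3 → ZMod p) => redeiFactor P ^ (p - 1)
  have hL (m) : mpowerSum p m = L m := by
    simp [mpowerSum, L, Fintype.linearCombination_apply, ZMod.castHom_self]
  have hrank := L.finrank_range_add_finrank_ker
  rw [Fintype.range_linearCombination, finrank_span_redeiFactor_pow,
    Module.finrank_fintype_fun_eq_card, ← Nat.card_eq_fintype_card, card_projectivePlane,
    ZMod.card] at hrank
  have hchoose := Nat.add_one_mul_choose_eq p 1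
  rw [Nat.choose_one_right] at hchoose
  calc Nat.card {m // mpowerSum p m = 0} = Nat.card (LinearMap.ker L) :=
        Nat.card_congr (Equiv.subtypeEquivRight fun m => by rw [hL, LinearMap.mem_ker])
    _ = p ^ Module.finrank (ZMod p) (LinearMap.ker L) := by
        rw [Module.natCard_eq_pow_finrank (K := ZMod p), Nat.card_zmod]
    _ = p ^ ((p + 1).choose 2 + 1) := by
        congr 1
        linarith
end
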